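/- arXiv:1301.5733 — 6 statements merged into one kernel-verified Lean document; each statement's English description precedes it below -/
import Mathlib

section
/- (Fidelity bound, Neyman–Pearson criterion.) Let Ψ be a unit vector in ℂ^{d_A} ⊗ ℂ^{d_B}, let U₀ and U₁ be unitary matrices on ℂ^{d_A} ⊗ ℂ^{d_B}, and let U_B be any unitary matrix on ℂ^{d_B}. Let E₀, E₁ be positive semidefinite matrices on ℂ^{d_A} with E₀ + E₁ = 1_A (a two-outcome POVM on subsystem A). Define the false-alarm probability P₁₀ = Re tr[(E₁ ⊗ 1_B) U₀ |Ψ⟩⟨Ψ| U₀ᴴ], the miss probability P₀₁ = Re tr[(E₀ ⊗ 1_B) U₁ |Ψ⟩⟨Ψ| U₁ᴴ], and the fidelity F = |⟨Ψ, U₁ᴴ (1_A ⊗ U_B)ᴴ U₀ Ψ⟩|². Then for any α ∈ [0,1], if P₁₀ ≤ α, then P₀₁ ≥ β(α, F). -/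
open Matrix Kronecker ComplexOrder

/-- `β(α, F)`: the minimum miss probability for discriminating two pure states of
fidelity `F` under the false-alarm constraint `P₁₀ ≤ α`. -/
noncomputable def beta (α F : ℝ) : ℝ :=
  if α < F then 1 - (Real.sqrt (α * F) + Real.sqrt ((1 - α) * (1 - F))) ^ 2 else 0

section RealLemmas

private lemma step_a1 {a u w x y : ℝ} (hu : 0 ≤ u) (hw : 0 ≤ w) (hx : 0 ≤ x) (hy : 0 ≤ y)
    (huw : u^2 + w^2 = 1) (hxy : x^2 + y^2 = 1) (key : a ≤ u * x + w * y) : a ≤ 1 := by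
  nlinarith [sq_nonneg (u*y - w*x), sq_nonneg (u*x + w*y - 1)]

private lemma step_b {u w x y c s : ℝ} (hu : 0 ≤ u) (hw : 0 ≤ w) (hy : 0 ≤ y) (hc : 0 ≤ c)
    (hyc : y ≤ c) (hsx : s ≤ x) (hus : u ≤ s) (hcw : c ≤ w)
    (hxy : x^2 + y^2 = 1) (hcs : c^2 + s^2 = 1) (hspos : 0 < s) :
    x * u + y * w ≤ s * u + c * w := by
  have hx0 : 0 ≤ x := le_trans hspos.le hsx
  have h1 : u * c ≤ s * w :=
    le_trans (mul_le_mul_of_nonneg_right hus hc) (mul_le_mul_of_nonneg_left hcw hspos.le)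
  have h2 : u * y ≤ x * w := by
    calc u * y ≤ s * c := mul_le_mul hus (le_trans hyc le_rfl) hy hspos.le
    _ ≤ x * w := mul_le_mul hsx hcw hc hx0
  have hA : 0 ≤ (c - y) * (w * (x + s) - u * (c + y)) := by
    apply mul_nonneg (by linarith)
    nlinarith
  nlinarith [hA, mul_pos hspos hspos]

private lemma step_c {a b c s u w : ℝ} (hu : 0 ≤ u) (hw : 0 ≤ w) (hc : 0 ≤ c) (hs : 0 ≤ s)
    (hb : 0 ≤ b) (ha : 0 ≤ a)
    (hab : a^2 + b^2 = 1) (hcs : c^2 + s^2 = 1) (huw : u^2 + w^2 = 1)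
    (hlt : u < a * s - c * b) : s * u + c * w < a := by
  have h5 : 0 < a - s * u := by nlinarith [mul_nonneg (mul_nonneg hs hc) hb]
  have h6 : (c * w) ^ 2 < (a - s * u) ^ 2 := by nlinarith [mul_nonneg hc hb]
  have h7 : c * w < a - s * u := lt_of_pow_lt_pow_left₀ 2 h5.le h6
  linarith

private lemma step_main {a b c s u w x y : ℝ} (hu : 0 ≤ u) (hw : 0 ≤ w) (hx : 0 ≤ x) (hy : 0 ≤ y)
    (hc : 0 ≤ c) (hb : 0 ≤ b) (ha : 0 ≤ a) (hspos : 0 < s)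
    (hab : a^2 + b^2 = 1) (hcs : c^2 + s^2 = 1) (huw : u^2 + w^2 = 1) (hxy : x^2 + y^2 = 1)
    (hyc : y ≤ c) (hsx : s ≤ x)
    (key : a ≤ u * x + w * y) : a * s - c * b ≤ u := by
  by_contra hlt
  push_neg at hlt
  have ha1 : a ≤ 1 := step_a1 hu hw hx hy huw hxy key
  have hus : u < s := by nlinarith [mul_nonneg hc hb]
  have hcw : c ≤ w := by nlinarith
  have hb1 := step_b hu hw hy hc hyc hsx hus.le hcw hxy hcs hspos
  have hb2 := step_c hu hw hc hspos.le hb ha hab hcs huw hlt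
  nlinarith

private lemma pos_ascb {α a b c s : ℝ} (hc2 : c^2 = α) (hs2 : s^2 = 1 - α) (hb2 : b^2 = 1 - a^2)
    (ha0 : 0 ≤ a) (hs0 : 0 ≤ s) (hc0 : 0 ≤ c) (hbnn : 0 ≤ b) (hF : α < a^2) :
    c * b < a * s := by
  have hsq : (c * b) ^ 2 < (a * s) ^ 2 := by nlinarith
  exact lt_of_pow_lt_pow_left₀ 2 (mul_nonneg ha0 hs0) hsq

private lemma final_step {a b c s u q : ℝ} (hab : a^2 + b^2 = 1) (hcs : c^2 + s^2 = 1)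
    (hu2 : u ^ 2 = q) (hmain : a * s - c * b ≤ u) (hpos : 0 ≤ a * s - c * b) :
    1 - (c * a + s * b) ^ 2 ≤ q := by
  have hid : 1 - (c*a + s*b)^2 = (a*s - c*b)^2 := by
    linear_combination (-(c^2 + s^2)) * hab - hcs
  have h2 : (a*s - c*b)^2 ≤ u^2 := by
    have := pow_le_pow_left₀ hpos hmain 2
    simpa using this
  rw [hid, ← hu2]; exact h2

private lemma beta_key {α a t q : ℝ} (hα0 : 0 ≤ α) (hα1 : α ≤ 1) (ha0 : 0 ≤ a)
    (ht0 : 0 ≤ t) (htα : t ≤ α) (ht1 : t ≤ 1) (hq0 : 0 ≤ q) (hq1 : q ≤ 1)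
    (key : a ≤ Real.sqrt q * Real.sqrt (1 - t) + Real.sqrt (1 - q) * Real.sqrt t) :
    beta α (a ^ 2) ≤ q := by
  rw [beta]
  split_ifs with hF
  case neg => exact hq0
  set u := Real.sqrt q with hu_def
  set w := Real.sqrt (1 - q) with hw_def
  set x' := Real.sqrt (1 - t) with hx_def
  set y' := Real.sqrt t with hy_def
  set c := Real.sqrt α with hc_def
  set s := Real.sqrt (1 - α) with hs_def
  have hu2 : u ^ 2 = q := Real.sq_sqrt hq0
  have hw2 : w ^ 2 = 1 - q := Real.sq_sqrt (by linarith)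
  have hx2 : x' ^ 2 = 1 - t := Real.sq_sqrt (by linarith)
  have hy2 : y' ^ 2 = t := Real.sq_sqrt ht0
  have hc2 : c ^ 2 = α := Real.sq_sqrt hα0
  have hu0 : 0 ≤ u := Real.sqrt_nonneg _
  have hw0 : 0 ≤ w := Real.sqrt_nonneg _
  have hx0 : 0 ≤ x' := Real.sqrt_nonneg _
  have hy0 : 0 ≤ y' := Real.sqrt_nonneg _
  have hc0 : 0 ≤ c := Real.sqrt_nonneg _
  have hs0 : 0 ≤ s := Real.sqrt_nonneg _
  have huw : u^2 + w^2 = 1 := by rw [hu2, hw2]; ring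
  have hxy : x'^2 + y'^2 = 1 := by rw [hx2, hy2]; ring
  have key' : a ≤ u * x' + w * y' := key
  have ha1 : a ≤ 1 := step_a1 hu0 hw0 hx0 hy0 huw hxy key'
  have hs2 : s ^ 2 = 1 - α := Real.sq_sqrt (by linarith)
  have hα1' : α < 1 := lt_of_lt_of_le hF (by nlinarith)
  have hcs : c^2 + s^2 = 1 := by rw [hc2, hs2]; ring
  have hspos : 0 < s := Real.sqrt_pos.mpr (by linarith)
  have hb0 : 0 ≤ 1 - a^2 := by nlinarith
  set b := Real.sqrt (1 - a^2) with hb_def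
  have hb2 : b ^ 2 = 1 - a^2 := Real.sq_sqrt hb0
  have hbnn : 0 ≤ b := Real.sqrt_nonneg _
  have hab : a^2 + b^2 = 1 := by rw [hb2]; ring
  have hyc : y' ≤ c := Real.sqrt_le_sqrt htα
  have hsx : s ≤ x' := Real.sqrt_le_sqrt (by linarith)
  have hmain : a * s - c * b ≤ u :=
    step_main hu0 hw0 hx0 hy0 hc0 hbnn ha0 hspos hab hcs huw hxy hyc hsx key'
  have h7 : Real.sqrt (α * a ^ 2) = c * a := by
    rw [Real.sqrt_mul hα0, Real.sqrt_sq ha0]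
  have h8 : Real.sqrt ((1 - α) * (1 - a ^ 2)) = s * b := by
    rw [hs_def, hb_def, ← Real.sqrt_mul (by linarith)]
  rw [h7, h8]
  have hpos : 0 ≤ a * s - c * b := by
    have := pos_ascb hc2 hs2 hb2 ha0 hs0 hc0 hbnn hF
    linarith
  exact final_step hab hcs hu2 hmain hpos

end RealLemmas

section MatrixLemmas

variable {n : Type*} [Fintype n] [DecidableEq n]

private lemma cs_dot (u v : n → ℂ) :
    ‖star u ⬝ᵥ v‖ ≤
      Real.sqrt ((star u ⬝ᵥ u).re) * Real.sqrt ((star v ⬝ᵥ v).re) := by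
  let u' : EuclideanSpace ℂ n := (WithLp.equiv 2 _).symm u
  let v' : EuclideanSpace ℂ n := (WithLp.equiv 2 _).symm v
  have h1 : (inner ℂ u' v' : ℂ) = star u ⬝ᵥ v := by rw [dotProduct_comm]; rfl
  have h2 : (inner ℂ u' u' : ℂ) = star u ⬝ᵥ u := by rw [dotProduct_comm]; rfl
  have h3 : (inner ℂ v' v' : ℂ) = star v ⬝ᵥ v := by rw [dotProduct_comm]; rfl
  have hn : ‖(inner ℂ u' v' : ℂ)‖ ≤ ‖u'‖ * ‖v'‖ := norm_inner_le_norm u' v'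
  have hu : ‖u'‖ = Real.sqrt ((star u ⬝ᵥ u).re) := by
    rw [@norm_eq_sqrt_re_inner ℂ, h2]; rfl
  have hv : ‖v'‖ = Real.sqrt ((star v ⬝ᵥ v).re) := by
    rw [@norm_eq_sqrt_re_inner ℂ, h3]; rfl
  calc ‖star u ⬝ᵥ v‖ = ‖(inner ℂ u' v' : ℂ)‖ := by rw [h1]
  _ ≤ _ := by rw [← hu, ← hv]; exact hn

open scoped MatrixOrder in
private lemma psd_eq_ct {m : Type*} [Fintype m] [DecidableEq m] {M : Matrix m m ℂ}
    (hM : M.PosSemidef) : ∃ B : Matrix m m ℂ, M = Bᴴ * B := by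
  obtain ⟨B, hB⟩ := CStarAlgebra.nonneg_iff_eq_star_mul_self.mp hM.nonneg
  exact ⟨B, by rw [hB, Matrix.star_eq_conjTranspose]⟩

private lemma psd_cs {M : Matrix n n ℂ} (hM : M.PosSemidef) (u v : n → ℂ) :
    ‖star u ⬝ᵥ (M *ᵥ v)‖ ≤
      Real.sqrt ((star u ⬝ᵥ (M *ᵥ u)).re) * Real.sqrt ((star v ⬝ᵥ (M *ᵥ v)).re) := by
  obtain ⟨B, rfl⟩ := psd_eq_ct hM
  have key : ∀ a b : n → ℂ, star a ⬝ᵥ ((Bᴴ * B) *ᵥ b) = star (B *ᵥ a) ⬝ᵥ (B *ᵥ b) := by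
    intro a b
    rw [← Matrix.mulVec_mulVec, Matrix.star_mulVec, ← Matrix.dotProduct_mulVec]
  rw [key u v, key u u, key v v]
  exact cs_dot _ _

private lemma kron_conjT {m p : Type*} (A : Matrix m m ℂ) (B : Matrix p p ℂ) :
    (A ⊗ₖ B)ᴴ = Aᴴ ⊗ₖ Bᴴ := by
  ext ⟨i, j⟩ ⟨k, l⟩
  simp [Matrix.conjTranspose_apply, Matrix.kroneckerMap_apply]

private lemma mul_vecMulVec_mul (U W : Matrix n n ℂ) (a b : n → ℂ) :
    U * Matrix.vecMulVec a b * W = Matrix.vecMulVec (U *ᵥ a) (b ᵥ* W) := by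
  ext i j
  simp only [Matrix.mul_apply, Matrix.vecMulVec_apply, Matrix.mulVec, Matrix.vecMul,
    dotProduct]
  rw [Finset.sum_mul_sum, Finset.sum_comm]
  simp only [Finset.sum_mul]
  refine Finset.sum_congr rfl fun k _ => Finset.sum_congr rfl fun l _ => by ring

private lemma trace_mul_vecMulVec (A : Matrix n n ℂ) (a b : n → ℂ) :
    (A * Matrix.vecMulVec a b).trace = b ⬝ᵥ (A *ᵥ a) := by
  simp only [Matrix.trace, Matrix.diag, Matrix.mul_apply, Matrix.vecMulVec_apply,
    dotProduct, Matrix.mulVec, Finset.mul_sum]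
  refine Finset.sum_congr rfl fun i _ => Finset.sum_congr rfl fun j _ => by ring

private lemma trace_rho (A U : Matrix n n ℂ) (v : n → ℂ) :
    (A * (U * Matrix.vecMulVec v (star v) * Uᴴ)).trace
      = star (U *ᵥ v) ⬝ᵥ (A *ᵥ (U *ᵥ v)) := by
  rw [mul_vecMulVec_mul, ← Matrix.star_mulVec, trace_mul_vecMulVec]

private lemma psd_kron_one {m p : Type*} [Fintype m] [DecidableEq m] [Fintype p] [DecidableEq p]
    {E : Matrix m m ℂ} (hE : E.PosSemidef) :
    (E ⊗ₖ (1 : Matrix p p ℂ)).PosSemidef := by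
  obtain ⟨B, rfl⟩ := psd_eq_ct hE
  have : (Bᴴ * B) ⊗ₖ (1 : Matrix p p ℂ)
      = (B ⊗ₖ (1 : Matrix p p ℂ))ᴴ * (B ⊗ₖ (1 : Matrix p p ℂ)) := by
    rw [kron_conjT, ← Matrix.mul_kronecker_mul]
    simp
  rw [this]
  exact Matrix.posSemidef_conjTranspose_mul_self _

private lemma unit_dot (V : Matrix n n ℂ) (hV : Vᴴ * V = 1) (a b : n → ℂ) :
    star (V *ᵥ a) ⬝ᵥ (V *ᵥ b) = star a ⬝ᵥ b := by
  rw [Matrix.star_mulVec, ← Matrix.dotProduct_mulVec, Matrix.mulVec_mulVec, hV,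
    Matrix.one_mulVec]

end MatrixLemmas


/-- Fidelity bound, Neyman–Pearson criterion: for any two-outcome POVM on subsystem A,
if the false-alarm probability `P₁₀ ≤ α`, then the miss probability `P₀₁ ≥ β(α, F)`,
where `F` is the fidelity `|⟨Ψ| U₁ᴴ (1_A ⊗ U_B)ᴴ U₀ |Ψ⟩|²`. -/
theorem stmt_1 (dA dB : ℕ) (hA : 0 < dA) (hB : 0 < dB)
    (Ψ : Fin dA × Fin dB → ℂ) (hΨ : ∑ i, ‖Ψ i‖ ^ 2 = 1)
    (U₀ U₁ : Matrix (Fin dA × Fin dB) (Fin dA × Fin dB) ℂ)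
    (hU₀ : U₀ ∈ Matrix.unitaryGroup (Fin dA × Fin dB) ℂ)
    (hU₁ : U₁ ∈ Matrix.unitaryGroup (Fin dA × Fin dB) ℂ)
    (U_B : Matrix (Fin dB) (Fin dB) ℂ)
    (hUB : U_B ∈ Matrix.unitaryGroup (Fin dB) ℂ)
    (E₀ E₁ : Matrix (Fin dA) (Fin dA) ℂ)
    (hE₀ : E₀.PosSemidef) (hE₁ : E₁.PosSemidef)
    (hPOVM : E₀ + E₁ = 1)
    (α : ℝ) (hα : α ∈ Set.Icc (0 : ℝ) 1)
    (hfa : (((E₁ ⊗ₖ (1 : Matrix (Fin dB) (Fin dB) ℂ)) *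
        (U₀ * Matrix.vecMulVec Ψ (star Ψ) * U₀ᴴ)).trace).re ≤ α) :
    beta α (‖star Ψ ⬝ᵥ
        ((U₁ᴴ * ((1 : Matrix (Fin dA) (Fin dA) ℂ) ⊗ₖ U_B)ᴴ * U₀) *ᵥ Ψ)‖ ^ 2) ≤
      (((E₀ ⊗ₖ (1 : Matrix (Fin dB) (Fin dB) ℂ)) *
        (U₁ * Matrix.vecMulVec Ψ (star Ψ) * U₁ᴴ)).trace).re := by
  set M := E₀ ⊗ₖ (1 : Matrix (Fin dB) (Fin dB) ℂ) with hM_def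
  set N := E₁ ⊗ₖ (1 : Matrix (Fin dB) (Fin dB) ℂ) with hN_def
  set V := (1 : Matrix (Fin dA) (Fin dA) ℂ) ⊗ₖ U_B with hV_def
  set x := U₀ *ᵥ Ψ with hx_def
  set z := U₁ *ᵥ Ψ with hz_def
  set y := V *ᵥ z with hy_def
  -- unitarity facts
  have h₀ : U₀ᴴ * U₀ = 1 := by simpa [Matrix.star_eq_conjTranspose] using hU₀.1
  have h₁ : U₁ᴴ * U₁ = 1 := by simpa [Matrix.star_eq_conjTranspose] using hU₁.1
  have hB' : U_Bᴴ * U_B = 1 := by simpa [Matrix.star_eq_conjTranspose] using hUB.1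
  have hVu : Vᴴ * V = 1 := by
    rw [hV_def, kron_conjT, Matrix.conjTranspose_one, ← Matrix.mul_kronecker_mul, one_mul, hB',
      Matrix.one_kronecker_one]
  -- PSD facts
  have hM : M.PosSemidef := psd_kron_one hE₀
  have hN : N.PosSemidef := psd_kron_one hE₁
  have hMN : M + N = 1 := by
    rw [hM_def, hN_def, ← Matrix.add_kronecker, hPOVM, Matrix.one_kronecker_one]
  -- commutation of M (resp N) with V
  have hcomm : ∀ E : Matrix (Fin dA) (Fin dA) ℂ,
      (E ⊗ₖ (1 : Matrix (Fin dB) (Fin dB) ℂ)) * V = V * (E ⊗ₖ (1 : Matrix (Fin dB) (Fin dB) ℂ)) := by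
    intro E
    rw [hV_def, ← Matrix.mul_kronecker_mul, ← Matrix.mul_kronecker_mul]
    simp
  -- y-diagonal equals z-diagonal
  have hdiag0 : ∀ (E : Matrix (Fin dA) (Fin dA) ℂ) (v : Fin dA × Fin dB → ℂ),
      star (V *ᵥ v) ⬝ᵥ ((E ⊗ₖ (1 : Matrix (Fin dB) (Fin dB) ℂ)) *ᵥ (V *ᵥ v))
        = star v ⬝ᵥ ((E ⊗ₖ (1 : Matrix (Fin dB) (Fin dB) ℂ)) *ᵥ v) := by
    intro E v
    rw [Matrix.mulVec_mulVec, hcomm E, ← Matrix.mulVec_mulVec]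
    exact unit_dot V hVu v _
  have hdiag : ∀ E : Matrix (Fin dA) (Fin dA) ℂ,
      star y ⬝ᵥ ((E ⊗ₖ (1 : Matrix (Fin dB) (Fin dB) ℂ)) *ᵥ y)
        = star z ⬝ᵥ ((E ⊗ₖ (1 : Matrix (Fin dB) (Fin dB) ℂ)) *ᵥ z) := fun E => hdiag0 E z
  -- norm 1 facts
  have hnormΨ : star Ψ ⬝ᵥ Ψ = 1 := by
    have hterm : ∀ zc : ℂ, (starRingEnd ℂ) zc * zc = ((‖zc‖^2 : ℝ) : ℂ) := fun zc => by
      rw [mul_comm, Complex.mul_conj']; norm_cast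
    calc star Ψ ⬝ᵥ Ψ = ∑ i, (starRingEnd ℂ) (Ψ i) * Ψ i := rfl
    _ = ∑ i, ((‖Ψ i‖^2 : ℝ) : ℂ) := by exact Finset.sum_congr rfl fun i _ => hterm (Ψ i)
    _ = ((∑ i, ‖Ψ i‖^2 : ℝ) : ℂ) := by push_cast; ring
    _ = 1 := by rw [hΨ]; norm_cast
  have hnx : star x ⬝ᵥ x = 1 := by rw [hx_def, unit_dot U₀ h₀, hnormΨ]
  have hnz : star z ⬝ᵥ z = 1 := by rw [hz_def, unit_dot U₁ h₁, hnormΨ]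
  -- trace rewrites
  rw [trace_rho]
  rw [trace_rho] at hfa
  rw [← hx_def] at hfa
  rw [← hz_def]
  -- fidelity rewrite
  have hfid : star y ⬝ᵥ x = star Ψ ⬝ᵥ ((U₁ᴴ * Vᴴ * U₀) *ᵥ Ψ) := by
    simp only [hy_def, hz_def, hx_def]
    rw [Matrix.mulVec_mulVec, Matrix.star_mulVec, ← Matrix.dotProduct_mulVec,
      Matrix.mulVec_mulVec, Matrix.conjTranspose_mul]
  rw [← hfid]
  -- real quantities
  set t : ℝ := (star x ⬝ᵥ (N *ᵥ x)).re with ht_def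
  set q : ℝ := (star z ⬝ᵥ (M *ᵥ z)).re with hq_def
  have ht0 : 0 ≤ t := by
    have := hN.re_dotProduct_nonneg x
    simpa [ht_def] using this
  have hq0 : 0 ≤ q := by
    have := hM.re_dotProduct_nonneg z
    simpa [hq_def] using this
  have hsum_x : (star x ⬝ᵥ (M *ᵥ x)).re + t = 1 := by
    have : star x ⬝ᵥ (M *ᵥ x) + star x ⬝ᵥ (N *ᵥ x) = 1 := by
      rw [← dotProduct_add, ← Matrix.add_mulVec, hMN, Matrix.one_mulVec, hnx]
    have := congrArg Complex.re this
    simpa [ht_def] using this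
  have hsum_z : q + (star z ⬝ᵥ (N *ᵥ z)).re = 1 := by
    have : star z ⬝ᵥ (M *ᵥ z) + star z ⬝ᵥ (N *ᵥ z) = 1 := by
      rw [← dotProduct_add, ← Matrix.add_mulVec, hMN, Matrix.one_mulVec, hnz]
    have := congrArg Complex.re this
    simpa [hq_def] using this
  have hMx0 : 0 ≤ (star x ⬝ᵥ (M *ᵥ x)).re := by simpa using hM.re_dotProduct_nonneg x
  have hNz0 : 0 ≤ (star z ⬝ᵥ (N *ᵥ z)).re := by simpa using hN.re_dotProduct_nonneg z
  have ht1 : t ≤ 1 := by linarith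
  have hq1 : q ≤ 1 := by linarith
  -- the key inequality
  have key : ‖star y ⬝ᵥ x‖ ≤
      Real.sqrt q * Real.sqrt (1 - t) + Real.sqrt (1 - q) * Real.sqrt t := by
    have hxsplit : x = M *ᵥ x + N *ᵥ x := by
      rw [← Matrix.add_mulVec, hMN, Matrix.one_mulVec]
    have habs : ‖star y ⬝ᵥ x‖
        ≤ ‖star y ⬝ᵥ (M *ᵥ x)‖ + ‖star y ⬝ᵥ (N *ᵥ x)‖ := by
      calc ‖star y ⬝ᵥ x‖
          = ‖star y ⬝ᵥ (M *ᵥ x) + star y ⬝ᵥ (N *ᵥ x)‖ := by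
            rw [← dotProduct_add, ← hxsplit]
      _ ≤ _ := norm_add_le _ _
    have hM_cs := psd_cs hM y x
    have hN_cs := psd_cs hN y x
    have hMy : (star y ⬝ᵥ (M *ᵥ y)).re = q := by rw [hdiag E₀, hq_def]
    have hNy : (star y ⬝ᵥ (N *ᵥ y)).re = 1 - q := by rw [hdiag E₁]; linarith
    have hMx : (star x ⬝ᵥ (M *ᵥ x)).re = 1 - t := by linarith
    have hNx : (star x ⬝ᵥ (N *ᵥ x)).re = t := ht_def.symm
    rw [hMy, hMx] at hM_cs
    rw [hNy, hNx] at hN_cs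
    calc ‖star y ⬝ᵥ x‖ ≤ _ := habs
    _ ≤ Real.sqrt q * Real.sqrt (1 - t) + Real.sqrt (1 - q) * Real.sqrt t :=
        add_le_add hM_cs hN_cs
  exact beta_key hα.1 hα.2 (norm_nonneg _) ht0 hfa ht1 hq0 hq1 key
end

section
/- Let η ∈ [0,1] and φ ∈ ℝ. There exists θ ∈ ℝ such that the complex number z = η·exp(iφ) + (1−η)·exp(−iθ) is real and positive (i.e., z.im = 0 and z.re > 0) if and only if one of the following conditions is satisfied: (I) η < 1/2, or (II) η ≥ 1/2 and |sin φ| ≤ (1−η)/η and cos φ > 0. -/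
lemma zim_eq (η φ θ : ℝ) :
    ((η : ℂ) * Complex.exp (Complex.I * φ) +
      (1 - (η : ℂ)) * Complex.exp (-(Complex.I * θ))).im
      = η * Real.sin φ - (1 - η) * Real.sin θ := by
  simp [Complex.exp_re, Complex.exp_im]
  ring

lemma zre_eq (η φ θ : ℝ) :
    ((η : ℂ) * Complex.exp (Complex.I * φ) +
      (1 - (η : ℂ)) * Complex.exp (-(Complex.I * θ))).re
      = η * Real.cos φ + (1 - η) * Real.cos θ := by
  simp [Complex.exp_re, Complex.exp_im]

/-- There exists `θ` making `z = η e^{iφ} + (1−η) e^{−iθ}` real and positive iff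
(I) `η < 1/2`, or (II) `η ≥ 1/2`, `|sin φ| ≤ (1−η)/η` and `cos φ > 0`. -/
theorem stmt_4 (η φ : ℝ) (hη : η ∈ Set.Icc (0 : ℝ) 1) :
    (∃ θ : ℝ,
        ((η : ℂ) * Complex.exp (Complex.I * φ) +
          (1 - (η : ℂ)) * Complex.exp (-(Complex.I * θ))).im = 0 ∧
        0 < ((η : ℂ) * Complex.exp (Complex.I * φ) +
          (1 - (η : ℂ)) * Complex.exp (-(Complex.I * θ))).re) ↔
      (η < 1 / 2 ∨ (1 / 2 ≤ η ∧ |Real.sin φ| ≤ (1 - η) / η ∧ 0 < Real.cos φ)) := by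
  obtain ⟨hη0, hη1⟩ := hη
  constructor
  · rintro ⟨θ, him, hre⟩
    rw [zim_eq] at him
    rw [zre_eq] at hre
    by_cases h2 : η < 1 / 2
    · exact Or.inl h2
    · push_neg at h2
      have hηpos : (0:ℝ) < η := by linarith
      have he : (1 - η) * Real.sin θ = η * Real.sin φ := by linarith
      have hb : η * |Real.sin φ| ≤ 1 - η := by
        have h1 : |(1 - η) * Real.sin θ| = |η * Real.sin φ| := by rw [he]
        rw [abs_mul, abs_mul, abs_of_nonneg (by linarith : (0:ℝ) ≤ 1 - η),
          abs_of_nonneg hη0] at h1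
        nlinarith [Real.abs_sin_le_one θ, abs_nonneg (Real.sin φ)]
      refine Or.inr ⟨h2, ?_, ?_⟩
      · rw [le_div_iff₀ hηpos]
        linarith [hb]
      · by_contra hc
        push_neg at hc
        have hgt : -(η * Real.cos φ) < (1 - η) * Real.cos θ := by linarith
        have hge : (0:ℝ) ≤ -(η * Real.cos φ) := by nlinarith
        have hsq : (η * Real.cos φ)^2 < ((1 - η) * Real.cos θ)^2 := by
          nlinarith [hgt, hge]
        have hsq2 : ((1 - η) * Real.sin θ)^2 = (η * Real.sin φ)^2 := by rw [he]
        have k1 : ((1-η)*Real.sin θ)^2 + ((1-η)*Real.cos θ)^2 = (1-η)^2 := by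
          linear_combination (1-η)^2 * Real.sin_sq_add_cos_sq θ
        have k2 : (η*Real.sin φ)^2 + (η*Real.cos φ)^2 = η^2 := by
          linear_combination η^2 * Real.sin_sq_add_cos_sq φ
        have hlt : η^2 < (1-η)^2 := by linarith
        nlinarith [hlt]
  · rintro h
    rcases eq_or_lt_of_le hη1 with rfl | hη1'
    · -- η = 1
      rcases h with h | ⟨h2, hs, hc⟩
      · norm_num at h
      · refine ⟨0, ?_, ?_⟩
        · rw [zim_eq]
          simp only [sub_self] at hs ⊢
          have : |Real.sin φ| ≤ 0 := by simpa using hs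
          have h0 : Real.sin φ = 0 := by
            have := abs_nonneg (Real.sin φ)
            have : |Real.sin φ| = 0 := le_antisymm ‹|Real.sin φ| ≤ 0› this
            exact abs_eq_zero.mp this
          simp [h0]
        · rw [zre_eq]
          simpa using hc
    · -- η < 1
      have hb : η * |Real.sin φ| ≤ 1 - η := by
        rcases h with h | ⟨h2, hs, hc⟩
        · nlinarith [Real.abs_sin_le_one φ, abs_nonneg (Real.sin φ)]
        · have hηpos : (0:ℝ) < η := by linarith
          rw [le_div_iff₀ hηpos] at hs
          linarith
      set s : ℝ := η * Real.sin φ / (1 - η) with hsdef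
      have hbpos : (0:ℝ) < 1 - η := by linarith
      have hs1 : |s| ≤ 1 := by
        rw [abs_div, abs_of_nonneg hbpos.le, div_le_one hbpos, abs_mul,
          abs_of_nonneg hη0]
        exact hb
      rw [abs_le] at hs1
      refine ⟨Real.arcsin s, ?_, ?_⟩
      · rw [zim_eq, Real.sin_arcsin hs1.1 hs1.2, hsdef]
        field_simp
        ring
      · rw [zre_eq, Real.cos_arcsin]
        have hsq1 : (0:ℝ) ≤ 1 - s^2 := by nlinarith [hs1.1, hs1.2]
        have hcos0 : (0:ℝ) ≤ Real.sqrt (1 - s^2) := Real.sqrt_nonneg _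
        rcases h with h | ⟨h2, hs, hc⟩
        · -- η < 1/2 : squared comparison
          have hsq : ((1-η) * Real.sqrt (1 - s^2))^2 = (1-η)^2 - (η * Real.sin φ)^2 := by
            rw [mul_pow, Real.sq_sqrt hsq1]
            have : ((1-η) * s)^2 = (η * Real.sin φ)^2 := by
              rw [hsdef]; field_simp
            nlinarith [this]
          have hgt : (η * Real.cos φ)^2 < ((1-η) * Real.sqrt (1 - s^2))^2 := by
            have k2 : (η*Real.sin φ)^2 + (η*Real.cos φ)^2 = η^2 := by
              linear_combination η^2 * Real.sin_sq_add_cos_sq φ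
            nlinarith [hsq]
          have hb0 : (0:ℝ) ≤ (1-η) * Real.sqrt (1 - s^2) := by positivity
          have h1 := lt_of_pow_lt_pow_left₀ 2 hb0 hgt
          have h2 := lt_of_pow_lt_pow_left₀ 2 hb0
            (show (-(η * Real.cos φ))^2 < ((1-η) * Real.sqrt (1 - s^2))^2 by
              nlinarith [hgt])
          linarith
        · have : 0 ≤ (1-η) * Real.sqrt (1 - s^2) := by positivity
          nlinarith [hc, h2]
end

section
/- Let η ∈ [0,1], φ, θ ∈ ℝ, and suppose the complex number z = η·exp(iφ) + (1−η)·exp(−iθ) satisfies z.im = 0 and z.re > 0. Let p : ℕ → ℝ be a probability mass function (p n ≥ 0 for all n and ∑ₙ p n = 1) such that the mean ⟨n⟩ = ∑ₙ n · p n is finite (the series ∑ₙ n · p n converges) and the series ∑ₙ p n · (z.re)ⁿ converges. Then the fidelity F = (∑ₙ p n · (z.re)ⁿ)² satisfies F ≥ (z.re)^{2⟨n⟩}. -/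
/-- Jensen-inequality fidelity bound: if `z = η e^{iφ} + (1−η) e^{−iθ}` is real and
positive, then the fidelity `F = (∑ₙ p n · zⁿ)²` satisfies `F ≥ z^{2⟨n⟩}`, where
`p` is the photon-number distribution and `⟨n⟩ = ∑ₙ n·p n` the average photon number. -/
theorem stmt_5 (η φ θ : ℝ) (hη : η ∈ Set.Icc (0 : ℝ) 1) (z : ℂ)
    (hz : z = (η : ℂ) * Complex.exp (Complex.I * φ) +
      (1 - (η : ℂ)) * Complex.exp (-(Complex.I * θ)))
    (him : z.im = 0) (hre : 0 < z.re)
    (p : ℕ → ℝ) (hp : ∀ n, 0 ≤ p n) (hpsum : ∑' n, p n = 1)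
    (hmean : Summable fun n : ℕ => (n : ℝ) * p n)
    (hzsum : Summable fun n : ℕ => p n * z.re ^ n) :
    z.re ^ (2 * ∑' n : ℕ, (n : ℝ) * p n) ≤ (∑' n : ℕ, p n * z.re ^ n) ^ 2 := by
  set x : ℝ := z.re with hx
  set m : ℝ := ∑' n : ℕ, (n : ℝ) * p n with hm
  set L : ℝ := Real.log x with hL
  have hpsummable : Summable p := by
    by_contra h
    rw [tsum_eq_zero_of_not_summable h] at hpsum
    norm_num at hpsum
  have hxm_pos : 0 < x ^ m := Real.rpow_pos_of_pos hre m
  -- key: x^m ≤ ∑' n, p n * x^n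
  have key : x ^ m ≤ ∑' n : ℕ, p n * x ^ n := by
    have hg : Summable (fun n : ℕ =>
        (x ^ m * (1 - m * L)) * p n + (x ^ m * L) * ((n : ℝ) * p n)) :=
      ((hpsummable.mul_left _).add (hmean.mul_left _))
    have hpt : ∀ n : ℕ,
        (x ^ m * (1 - m * L)) * p n + (x ^ m * L) * ((n : ℝ) * p n) ≤ p n * x ^ n := by
      intro n
      have h1 : x ^ m * (1 + ((n : ℝ) - m) * L) ≤ x ^ n := by
        have hxn : (x : ℝ) ^ n = x ^ (n : ℝ) := (Real.rpow_natCast x n).symm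
        have hsplit : x ^ (n : ℝ) = x ^ m * x ^ ((n : ℝ) - m) := by
          rw [← Real.rpow_add hre]; ring_nf
        have hexp : x ^ ((n : ℝ) - m) = Real.exp (((n : ℝ) - m) * L) := by
          rw [Real.rpow_def_of_pos hre, hL]; ring_nf
        have htan : 1 + ((n : ℝ) - m) * L ≤ Real.exp (((n : ℝ) - m) * L) := by
          have := Real.add_one_le_exp (((n : ℝ) - m) * L); linarith
        calc x ^ m * (1 + ((n : ℝ) - m) * L)
            ≤ x ^ m * Real.exp (((n : ℝ) - m) * L) := by
              exact mul_le_mul_of_nonneg_left htan hxm_pos.le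
          _ = x ^ n := by rw [hxn, hsplit, hexp]
      have h2 : p n * (x ^ m * (1 + ((n : ℝ) - m) * L)) ≤ p n * x ^ n :=
        mul_le_mul_of_nonneg_left h1 (hp n)
      nlinarith [h2]
    have hsum_le := Summable.tsum_le_tsum hpt hg hzsum
    have htg : (∑' n : ℕ,
        ((x ^ m * (1 - m * L)) * p n + (x ^ m * L) * ((n : ℝ) * p n))) = x ^ m := by
      rw [Summable.tsum_add (hpsummable.mul_left _) (hmean.mul_left _),
        tsum_mul_left, tsum_mul_left, hpsum, ← hm]
      ring
    rw [htg] at hsum_le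
    exact hsum_le
  have h2m : x ^ (2 * m) = (x ^ m) ^ 2 := by
    rw [sq, ← Real.rpow_add hre]; ring_nf
  rw [h2m]
  exact pow_le_pow_left₀ hxm_pos.le key 2
end

section
/- Fix η ∈ (0,1). For φ ∈ ℝ with |η sin φ/(1−η)| ≤ 1, let θ(φ) = arcsin(η sin φ/(1−η)) and z(φ)² = 1 − 4η(1−η)·sin²((φ+θ(φ))/2). Then the limit as φ → 0 (φ ≠ 0) of ln(z(φ)²)/φ² equals −η/(1−η). (Consequently, for small phase shifts, the fidelity bound F_z = (z²)^{⟨n⟩} is approximately exp[−(η/(1−η))·⟨n⟩·φ²].) -/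
open Filter Real

/-- Small-phase asymptotics of the fidelity bound: with
`θ(φ) = arcsin(η sin φ/(1−η))` and `z(φ)² = 1 − 4η(1−η) sin²((φ+θ(φ))/2)`,
`ln(z(φ)²)/φ² → −η/(1−η)` as `φ → 0`. -/
theorem stmt_7 (η : ℝ) (hη : η ∈ Set.Ioo (0 : ℝ) 1) :
    Tendsto (fun φ : ℝ =>
        Real.log (1 - 4 * η * (1 - η) *
          Real.sin ((φ + Real.arcsin (η * Real.sin φ / (1 - η))) / 2) ^ 2) / φ ^ 2)
      (nhdsWithin 0 {0}ᶜ) (nhds (-(η / (1 - η)))) := by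
  obtain ⟨hη0, hη1⟩ := hη
  have h1η : (0:ℝ) < 1 - η := by linarith
  set c : ℝ := η / (1 - η) with hc
  obtain ⟨g, hgdef⟩ : ∃ g : ℝ → ℝ, g = fun φ => φ + Real.arcsin (η * Real.sin φ / (1 - η)) :=
    ⟨_, rfl⟩
  have hg0 : g 0 = 0 := by simp [hgdef]
  -- derivative of the inner function at 0
  have hA : HasDerivAt (fun φ : ℝ => η * Real.sin φ / (1 - η)) c 0 := by
    have := ((Real.hasDerivAt_sin 0).const_mul η).div_const (1 - η)
    simpa [hc] using this
  have harc : HasDerivAt (fun φ : ℝ => Real.arcsin (η * Real.sin φ / (1 - η))) c 0 := by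
    have h0 : η * Real.sin 0 / (1 - η) = 0 := by simp
    have h := (Real.hasDerivAt_arcsin (x := η * Real.sin 0 / (1 - η))
      (by rw [h0]; norm_num) (by rw [h0]; norm_num)).comp 0 hA
    simpa [h0, Function.comp_def] using h
  have hgd : HasDerivAt g (1 + c) 0 := by rw [hgdef]; exact (hasDerivAt_id 0).add harc
  obtain ⟨S, hSdef⟩ : ∃ S : ℝ → ℝ, S = fun φ => Real.sin (g φ / 2) := ⟨_, rfl⟩
  have hS0 : S 0 = 0 := by simp [hSdef, hg0]
  have hSd : HasDerivAt S ((1 + c) / 2) 0 := by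
    rw [hSdef]
    have h := (Real.hasDerivAt_sin (g 0 / 2)).comp 0 (hgd.div_const 2)
    simpa [hg0, Function.comp_def, mul_comm] using h
  have hSslope : Tendsto (fun φ => S φ / φ) (nhdsWithin 0 {0}ᶜ) (nhds ((1 + c) / 2)) := by
    have h := hasDerivAt_iff_tendsto_slope.1 hSd
    refine h.congr fun φ => ?_
    simp [slope_def_field, hS0]
  obtain ⟨u, hudef⟩ : ∃ u : ℝ → ℝ, u = fun φ => 4 * η * (1 - η) *
      Real.sin ((φ + Real.arcsin (η * Real.sin φ / (1 - η))) / 2) ^ 2 := ⟨_, rfl⟩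
  have huS : ∀ φ, u φ = 4 * η * (1 - η) * S φ ^ 2 := by
    intro φ; rw [hudef, hSdef, hgdef]
  -- limit of u φ / φ²
  have hval : 4 * η * (1 - η) * ((1 + c) / 2 * ((1 + c) / 2)) = η / (1 - η) := by
    rw [hc]; field_simp; ring
  have hu_div : Tendsto (fun φ => u φ / φ ^ 2) (nhdsWithin 0 {0}ᶜ) (nhds (η / (1 - η))) := by
    have h := (hSslope.mul hSslope).const_mul (4 * η * (1 - η))
    rw [hval] at h
    refine h.congr fun φ => ?_
    rw [huS]; ring
  -- log(1 - t)/t → -1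
  have hlog : Tendsto (fun t => Real.log (1 - t) / t) (nhdsWithin 0 {0}ᶜ) (nhds (-1)) := by
    have hld : HasDerivAt (fun t : ℝ => Real.log (1 - t)) (-1) 0 := by
      have h := (Real.hasDerivAt_log (by norm_num : (1:ℝ) - 0 ≠ 0)).comp 0
        ((hasDerivAt_id 0).const_sub 1)
      simpa [Function.comp_def] using h
    have h := hasDerivAt_iff_tendsto_slope.1 hld
    refine h.congr fun t => ?_
    simp [slope_def_field]
  -- u tends to 0 within nonzero values
  have hu_cont : Continuous u := by
    rw [hudef]
    exact continuous_const.mul ((Real.continuous_sin.comp ((continuous_id.add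
      (Real.continuous_arcsin.comp ((continuous_const.mul Real.continuous_sin).div_const
        (1 - η)))).div_const 2)).pow 2)
  have hu_ne : ∀ᶠ φ in nhdsWithin (0:ℝ) {0}ᶜ, u φ ≠ 0 := by
    have hmem : Set.Ioo (-(π/2)) (π/2) ∈ nhds (0:ℝ) :=
      Ioo_mem_nhds (by linarith [Real.pi_pos]) (by linarith [Real.pi_pos])
    filter_upwards [mem_nhdsWithin_of_mem_nhds hmem, self_mem_nhdsWithin] with φ hφ hφ0
    have hφ0' : φ ≠ 0 := hφ0
    have harcbd1 : Real.arcsin (η * Real.sin φ / (1 - η)) ≤ π / 2 := Real.arcsin_le_pi_div_two _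
    have harcbd2 : -(π / 2) ≤ Real.arcsin (η * Real.sin φ / (1 - η)) :=
      Real.neg_pi_div_two_le_arcsin _
    have hgne : g φ ≠ 0 := by
      rcases lt_or_gt_of_ne hφ0' with hneg | hpos
      · have hsin : Real.sin φ ≤ 0 := by
          have : Real.sin (-φ) ≥ 0 :=
            le_of_lt (Real.sin_pos_of_pos_of_lt_pi (by linarith [hφ.1])
              (by nlinarith [hφ.1, Real.pi_gt_three]))
          rw [Real.sin_neg] at this; linarith
        have harg : η * Real.sin φ / (1 - η) ≤ 0 := by
          apply div_nonpos_of_nonpos_of_nonneg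
          · nlinarith
          · linarith
        have : Real.arcsin (η * Real.sin φ / (1 - η)) ≤ 0 := Real.arcsin_nonpos.2 harg
        have : g φ < 0 := by simp only [hgdef]; linarith
        exact ne_of_lt this
      · have hsin : 0 ≤ Real.sin φ :=
          le_of_lt (Real.sin_pos_of_pos_of_lt_pi hpos
            (by nlinarith [hφ.2, Real.pi_gt_three]))
        have harg : 0 ≤ η * Real.sin φ / (1 - η) := by positivity
        have : 0 ≤ Real.arcsin (η * Real.sin φ / (1 - η)) := Real.arcsin_nonneg.2 harg
        have : 0 < g φ := by simp only [hgdef]; linarith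
        exact ne_of_gt this
    have hgb1 : -π < g φ := by
      simp only [hgdef]
      have := hφ.1
      have hpi : π / 2 + π / 2 = π := by ring
      linarith
    have hgb2 : g φ < π := by
      simp only [hgdef]
      have := hφ.2
      linarith
    have hsinne : Real.sin (g φ / 2) ≠ 0 := by
      intro h
      have hpi : (0:ℝ) < π := Real.pi_pos
      have h1 : -π < g φ / 2 := by linarith
      have h2 : g φ / 2 < π := by linarith
      have := (Real.sin_eq_zero_iff_of_lt_of_lt h1 h2).1 h
      exact hgne (by linarith)
    rw [huS]
    simp only [hSdef]
    exact mul_ne_zero (by positivity) (pow_ne_zero 2 hsinne)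
  have hu0 : Tendsto u (nhdsWithin 0 {0}ᶜ) (nhdsWithin 0 {0}ᶜ) := by
    rw [tendsto_nhdsWithin_iff]
    constructor
    · have h := hu_cont.tendsto 0
      have hu00 : u 0 = 0 := by simp [huS, hS0]
      rw [hu00] at h
      exact h.mono_left nhdsWithin_le_nhds
    · exact hu_ne
  have hcomp : Tendsto (fun φ => Real.log (1 - u φ) / u φ) (nhdsWithin 0 {0}ᶜ) (nhds (-1)) :=
    hlog.comp hu0
  have hfinal := hcomp.mul hu_div
  have hvalf : (-1 : ℝ) * (η / (1 - η)) = -(η / (1 - η)) := by ring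
  rw [hvalf] at hfinal
  refine hfinal.congr' ?_
  filter_upwards [hu_ne] with φ hu
  have : Real.log (1 - 4 * η * (1 - η) *
      Real.sin ((φ + Real.arcsin (η * Real.sin φ / (1 - η))) / 2) ^ 2) = Real.log (1 - u φ) := by
    rw [hudef]
  rw [this]
  field_simp
end

section
/- Fix φ ∈ ℝ. For η ∈ (0,1) sufficiently small that |η sin φ/(1−η)| ≤ 1, let θ(η) = arcsin(η sin φ/(1−η)) and z(η)² = 1 − 4η(1−η)·sin²((φ+θ(η))/2). Then the limit as η → 0⁺ of ln(z(η)²)/η equals −4 sin²(φ/2). (Consequently, in the low-efficiency limit the fidelity bound F_z = (z²)^{⟨n⟩} coincides to leading order with the coherent-state fidelity F_coh = exp(−4η⟨n⟩ sin²(φ/2)), so the coherent state is near-optimal for phase detection in the low-efficiency limit with vacuum noise.) -/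
open Filter Real

/-- Low-efficiency asymptotics of the fidelity bound: with
`θ(η) = arcsin(η sin φ/(1−η))` and `z(η)² = 1 − 4η(1−η) sin²((φ+θ(η))/2)`,
`ln(z(η)²)/η → −4 sin²(φ/2)` as `η → 0⁺`. -/
theorem stmt_8 (φ : ℝ) :
    Tendsto (fun η : ℝ =>
        Real.log (1 - 4 * η * (1 - η) *
          Real.sin ((φ + Real.arcsin (η * Real.sin φ / (1 - η))) / 2) ^ 2) / η)
      (nhdsWithin 0 (Set.Ioi 0)) (nhds (-(4 * Real.sin (φ / 2) ^ 2))) := by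
  set s : ℝ → ℝ := fun η => Real.sin ((φ + Real.arcsin (η * Real.sin φ / (1 - η))) / 2) with hs
  have hscont : ContinuousAt s 0 := by
    apply Real.continuous_sin.continuousAt.comp
    apply ContinuousAt.div_const
    apply ContinuousAt.add continuousAt_const
    apply Real.continuous_arcsin.continuousAt.comp
    exact (continuousAt_id.mul continuousAt_const).div
      (continuousAt_const.sub continuousAt_id) (by norm_num)
  have hs0 : s 0 = Real.sin (φ / 2) := by simp [hs]
  by_cases h : Real.sin (φ / 2) = 0
  · have hsφ : Real.sin φ = 0 := by
      have : Real.sin φ = 2 * Real.sin (φ/2) * Real.cos (φ/2) := by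
        rw [← Real.sin_two_mul]; ring_nf
      rw [this, h]; ring
    have heq : ∀ η : ℝ, Real.log (1 - 4 * η * (1 - η) * s η ^ 2) / η = 0 := by
      intro η
      have : s η = Real.sin (φ / 2) := by simp [hs, hsφ]
      rw [this, h]
      norm_num
    rw [show -(4 * Real.sin (φ / 2) ^ 2) = 0 by rw [h]; ring]
    exact Tendsto.congr (fun η => (heq η).symm) tendsto_const_nhds
  · set g : ℝ → ℝ := fun η => -(4 * η * (1 - η) * s η ^ 2) with hg
    have hgcont : ContinuousAt g 0 := by
      apply ContinuousAt.neg
      exact (((continuousAt_const.mul continuousAt_id).mul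
        (continuousAt_const.sub continuousAt_id)).mul (hscont.pow 2))
    have hg0 : g 0 = 0 := by simp [hg]
    -- g tends to 0 within punctured
    have hsev : ∀ᶠ η in nhdsWithin (0:ℝ) (Set.Ioi 0), s η ≠ 0 := by
      apply Filter.Eventually.filter_mono nhdsWithin_le_nhds
      have := hscont.tendsto
      rw [hs0] at this
      exact this.eventually_ne h
    have hηev : ∀ᶠ η in nhdsWithin (0:ℝ) (Set.Ioi 0), 0 < η ∧ η < 1 := by
      filter_upwards [self_mem_nhdsWithin,
        Ioo_mem_nhdsGT_of_mem (Set.mem_Ico.mpr ⟨le_refl 0, by norm_num⟩ :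
          (0:ℝ) ∈ Set.Ico 0 1)] with η h1 h2
      exact ⟨h1, h2.2⟩
    have hgne : ∀ᶠ η in nhdsWithin (0:ℝ) (Set.Ioi 0), g η ≠ 0 := by
      filter_upwards [hsev, hηev] with η h1 h2
      simp only [hg, neg_ne_zero]
      exact mul_ne_zero (mul_ne_zero (mul_ne_zero (by norm_num) h2.1.ne') (by linarith [h2.2])) (pow_ne_zero _ h1)
    have hgten : Tendsto g (nhdsWithin 0 (Set.Ioi 0)) (nhdsWithin 0 {(0:ℝ)}ᶜ) := by
      rw [tendsto_nhdsWithin_iff]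
      constructor
      · have := hgcont.tendsto
        rw [hg0] at this
        exact this.mono_left nhdsWithin_le_nhds
      · exact hgne
    -- log(1+x)/x → 1 at 0 punctured
    have hlog : Tendsto (fun x : ℝ => Real.log (1 + x) / x) (nhdsWithin 0 {(0:ℝ)}ᶜ) (nhds 1) := by
      have h1 : HasDerivAt Real.log 1 1 := by
        simpa using Real.hasDerivAt_log one_ne_zero
      have h2 := hasDerivAt_iff_tendsto_slope.mp h1
      have hmap : Tendsto (fun x : ℝ => 1 + x) (nhdsWithin 0 {(0:ℝ)}ᶜ)
          (nhdsWithin 1 {(1:ℝ)}ᶜ) := by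
        rw [tendsto_nhdsWithin_iff]
        constructor
        · have : Tendsto (fun x : ℝ => 1 + x) (nhds 0) (nhds 1) := by
            simpa using (continuous_add_left (1:ℝ)).tendsto (0:ℝ)
          exact this.mono_left nhdsWithin_le_nhds
        · filter_upwards [self_mem_nhdsWithin] with x hx
          simp only [Set.mem_compl_iff, Set.mem_singleton_iff] at hx ⊢
          intro hc; exact hx (by linarith)
      have := h2.comp hmap
      apply this.congr
      intro x
      simp [slope_def_field, div_eq_div_iff]
    have hA : Tendsto (fun η => g η / η) (nhdsWithin 0 (Set.Ioi 0))
        (nhds (-(4 * Real.sin (φ / 2) ^ 2))) := by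
      have heq : ∀ᶠ η in nhdsWithin (0:ℝ) (Set.Ioi 0),
          -(4 * (1 - η) * s η ^ 2) = g η / η := by
        filter_upwards [hηev] with η hη
        field_simp [hg, hη.1.ne']
        ring
      apply Tendsto.congr' heq
      have : ContinuousAt (fun η => -(4 * (1 - η) * s η ^ 2)) 0 := by
        exact (((continuousAt_const.mul (continuousAt_const.sub continuousAt_id)).mul
          (hscont.pow 2))).neg
      have := this.tendsto.mono_left (nhdsWithin_le_nhds : nhdsWithin (0:ℝ) (Set.Ioi 0) ≤ nhds 0)
      simpa [hs0] using this
    have hB : Tendsto (fun η => Real.log (1 + g η) / g η) (nhdsWithin 0 (Set.Ioi 0)) (nhds 1) :=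
      hlog.comp hgten
    have hprod := hB.mul hA
    rw [one_mul] at hprod
    apply Tendsto.congr' _ hprod
    filter_upwards [hgne] with η hη
    rw [div_mul_div_comm, mul_comm (g η) η, mul_div_mul_right _ _ hη]
    have h2 : (1 : ℝ) + g η = 1 - 4 * η * (1 - η) * s η ^ 2 := by simp only [hg]; ring
    rw [h2]
end

section
/- Let S > 0, N > 0, and η ∈ (0,1). Then the infimum over λ ∈ ℂ of the quantity 4·(|η − (1−η)λ|²·S + |1 + λ|²·η(1−η)·N) equals 4·(1/S + (1−η)/(η·N))⁻¹, i.e., 4·S·η·N/(S·(1−η) + η·N), and this infimum is attained (at a real value of λ). -/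
/-- The minimized spectral quantum Fisher information for lossy phase waveform
estimation: the infimum over `λ ∈ ℂ` of
`4(|η − (1−η)λ|² S + |1 + λ|² η(1−η) N)` equals `4(1/S + (1−η)/(ηN))⁻¹`,
i.e. `4SηN/(S(1−η) + ηN)`, and it is attained at a real value of `λ`. -/
theorem stmt_13 (S N η : ℝ) (hS : 0 < S) (hN : 0 < N) (hη : η ∈ Set.Ioo (0 : ℝ) 1) :
    IsLeast
      (Set.range fun l : ℂ =>
        4 * (‖(η : ℂ) - (1 - (η : ℂ)) * l‖ ^ 2 * S +
          ‖1 + l‖ ^ 2 * η * (1 - η) * N))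
      (4 * (1 / S + (1 - η) / (η * N))⁻¹) ∧
    (∃ l : ℝ,
      4 * (‖(η : ℂ) - (1 - (η : ℂ)) * (l : ℂ)‖ ^ 2 * S +
          ‖1 + (l : ℂ)‖ ^ 2 * η * (1 - η) * N) =
        4 * (1 / S + (1 - η) / (η * N))⁻¹) ∧
    4 * (1 / S + (1 - η) / (η * N))⁻¹ = 4 * S * η * N / (S * (1 - η) + η * N) := by
  obtain ⟨hη0, hη1⟩ := hη
  have hη1' : 0 < 1 - η := by linarith
  have hD : 0 < S * (1 - η) + η * N := by positivity
  have hT : 4 * (1 / S + (1 - η) / (η * N))⁻¹ = 4 * S * η * N / (S * (1 - η) + η * N) := by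
    rw [div_add_div _ _ (ne_of_gt hS) (by positivity : η * N ≠ 0)]
    rw [inv_div]
    field_simp
    ring
  -- value at the real minimizer
  have hwit : ∀ l : ℝ,
      4 * (‖(η : ℂ) - (1 - (η : ℂ)) * (l : ℂ)‖ ^ 2 * S +
          ‖1 + (l : ℂ)‖ ^ 2 * η * (1 - η) * N)
      = 4 * ((η - (1 - η) * l) ^ 2 * S + (1 + l) ^ 2 * η * (1 - η) * N) := by
    intro l
    rw [Complex.sq_norm, Complex.sq_norm]
    simp [Complex.normSq_apply]
    ring
  refine ⟨⟨?_, ?_⟩, ?_, hT⟩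
  · -- membership: attained at l = η(S-N)/D
    refine ⟨((η * (S - N) / (S * (1 - η) + η * N) : ℝ) : ℂ), ?_⟩
    show 4 * (‖(η : ℂ) - (1 - (η : ℂ)) * _‖ ^ 2 * S +
          ‖1 + _‖ ^ 2 * η * (1 - η) * N) = _
    rw [hwit, hT]
    field_simp
    ring
  · -- lower bound
    rintro x ⟨l, rfl⟩
    rw [hT]
    simp only [Complex.sq_norm, Complex.normSq_apply, Complex.sub_re, Complex.sub_im,
      Complex.mul_re, Complex.mul_im, Complex.add_re, Complex.add_im, Complex.one_re,
      Complex.one_im, Complex.ofReal_re, Complex.ofReal_im]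
    set a := l.re
    set b := l.im
    rw [div_le_iff₀ hD]
    nlinarith [mul_nonneg hη1'.le (sq_nonneg ((S * (1 - η) + η * N) * a - η * (S - N))),
      mul_nonneg hη1'.le (sq_nonneg ((S * (1 - η) + η * N) * b))]
  · refine ⟨η * (S - N) / (S * (1 - η) + η * N), ?_⟩
    rw [hwit, hT]
    field_simp
    ring
end
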